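/- Deterministic core of leverage score approximation via undersampling: let A be a real n×d matrix with rows a_1,…,a_n, let u ∈ ℝⁿ with u_i ≥ 0 for all i, and let α ∈ (0,1]. Let S and W be n×n nonnegative diagonal matrices such that: (i) Aᵀ S² A ⪯ Aᵀ A; (ii) 0 ≤ W_{jj} ≤ 1 for all j; (iii) τ_i(WA) ≤ α·u_i for all i; (iv) ∑_{i : W_{ii} ≠ 1} u_i ≤ d/α; and (v) (α/2)·Aᵀ W² A ⪯ Aᵀ W S² W A. Then, taking each min in the extended nonnegative reals (so min{∞, u_i} = u_i), ∑_{i=1}^n min{ τ_i^{SA}(A), u_i } ≤ 3d/α. -/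

import Mathlib

/-
Conditions (ii) and (v) give `‖WAv‖² ≤ (2/α)‖SAv‖²` for all `v`, and such a domination passes to
generalized leverage scores: if `a = (WA)ᵀx`, then `y = SA·C⁺a`, with `C⁺` a pseudo-inverse of
`C = (SA)ᵀSA`, solves `(SA)ᵀy = a`, and Cauchy–Schwarz gives `‖y‖² ≤ (2/α)‖x‖²`. A row with
`Wᵢᵢ = 1` is a row of `WA`, so these rows contribute at most `(2/α)∑ᵢ τᵢ(WA) ≤ 2d/α` (the leverage
scores of `WA` sum to the trace of a projection of rank at most `d`); by (iv) the other rows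
contribute at most `d/α` through `uᵢ`.
-/

open Matrix
open scoped ENNReal Classical

/-- The leverage score of row `i` of `M`:
`τᵢ(M) = inf {‖x‖₂² : Mᵀx = mᵢ}` (the set is nonempty since `x = eᵢ` works). -/
noncomputable def lev {n d : ℕ} (M : Matrix (Fin n) (Fin d) ℝ) (i : Fin n) : ℝ :=
  sInf {t : ℝ | ∃ x : Fin n → ℝ, Mᵀ *ᵥ x = M i ∧ t = ∑ j, (x j) ^ 2}

/-- The generalized leverage score of a row `a` with respect to `B`:
`τ^B(a) = inf {‖x‖₂² : Bᵀx = a} ∈ [0,∞]`, with `inf ∅ = ∞`. -/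
noncomputable def glev {k d : ℕ} (B : Matrix (Fin k) (Fin d) ℝ) (a : Fin d → ℝ) : ℝ≥0∞ :=
  sInf {t : ℝ≥0∞ | ∃ x : Fin k → ℝ, Bᵀ *ᵥ x = a ∧ t = ENNReal.ofReal (∑ j, (x j) ^ 2)}

lemma Matrix.isHermitian_transpose_mul_self {κ ι : Type*} [Fintype κ] (B : Matrix κ ι ℝ) :
    (Bᵀ * B).IsHermitian := by
  simpa using isHermitian_conjTranspose_mul_self B

lemma Matrix.IsHermitian.exists_pinv {ι : Type*} [Fintype ι] [DecidableEq ι]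
    {C : Matrix ι ι ℝ} (hC : C.IsHermitian) :
    ∃ G : Matrix ι ι ℝ, Gᵀ = G ∧ C * G * C = C ∧ (C * G).trace ≤ Fintype.card ι := by
  set U : Matrix ι ι ℝ := (hC.eigenvectorUnitary : Matrix ι ι ℝ)
  have hUU : Uᵀ * U = 1 := by
    simpa [U, star_eq_conjTranspose] using Unitary.coe_star_mul_self hC.eigenvectorUnitary
  set lam : ι → ℝ := hC.eigenvalues
  set g : ι → ℝ := fun i => if lam i = 0 then 0 else (lam i)⁻¹
  have hspec : C = U * diagonal lam * Uᵀ := by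
    have := hC.spectral_theorem
    rw [Unitary.conjStarAlgAut_apply, star_eq_conjTranspose,
      conjTranspose_eq_transpose_of_trivial] at this
    simpa using this
  have conj_mul : ∀ f h : ι → ℝ, (U * diagonal f * Uᵀ) * (U * diagonal h * Uᵀ)
      = U * diagonal (f * h) * Uᵀ := by
    intro f h
    calc (U * diagonal f * Uᵀ) * (U * diagonal h * Uᵀ)
        = U * (diagonal f * ((Uᵀ * U) * diagonal h)) * Uᵀ := by simp only [mul_assoc]
      _ = U * diagonal (f * h) * Uᵀ := by rw [hUU, one_mul, diagonal_mul_diagonal]; rfl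
  have hlg : ∀ i, lam i * g i = if lam i = 0 then 0 else 1 := fun i => by
    by_cases h : lam i = 0 <;> simp [g, h]
  refine ⟨U * diagonal g * Uᵀ, ?_, ?_, ?_⟩
  · simp [transpose_mul, mul_assoc]
  · have hlgl : lam * g * lam = lam := by
      funext i
      by_cases h : lam i = 0 <;> simp [g, h]
    rw [hspec, conj_mul, conj_mul, hlgl]
  · rw [hspec, conj_mul, mul_assoc, trace_mul_comm, mul_assoc, hUU, mul_one, trace_diagonal]
    calc ∑ i, lam i * g i ≤ ∑ _i : ι, (1 : ℝ) :=
          Finset.sum_le_sum fun i _ => by rw [hlg]; split_ifs <;> norm_num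
      _ = Fintype.card ι := by simp

section Domination

variable {k m d : ℕ} {B : Matrix (Fin k) (Fin d) ℝ} {M : Matrix (Fin m) (Fin d) ℝ} {c : ℝ}

lemma sum_sq_mulVec_eq_dotProduct (B : Matrix (Fin k) (Fin d) ℝ) (v : Fin d → ℝ) :
    ∑ j, (B *ᵥ v) j ^ 2 = v ⬝ᵥ ((Bᵀ * B) *ᵥ v) := by
  rw [← mulVec_mulVec, dotProduct_transpose_mulVec]
  simp [dotProduct, sq]

lemma gram_mul_pinv_mul_transpose_of_dominated
    (hMB : ∀ v, ∑ j, (M *ᵥ v) j ^ 2 ≤ c * ∑ j, (B *ᵥ v) j ^ 2)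
    {G : Matrix (Fin d) (Fin d) ℝ} (hGt : Gᵀ = G) (hG : Bᵀ * B * G * (Bᵀ * B) = Bᵀ * B) :
    Bᵀ * B * G * Mᵀ = Mᵀ := by
  set C := Bᵀ * B
  have hM : M * (1 - G * C) = 0 := by
    rw [ext_iff_mulVec]
    intro v
    set v' := (1 - G * C) *ᵥ v
    have hCv' : C *ᵥ v' = 0 := by
      simp only [v', mulVec_mulVec, Matrix.mul_sub, Matrix.mul_one, ← Matrix.mul_assoc, hG,
        sub_self, zero_mulVec]
    have hBv' : ∑ j, (B *ᵥ v') j ^ 2 = 0 := by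
      rw [sum_sq_mulVec_eq_dotProduct, hCv', dotProduct_zero]
    have hMv' : ∑ j, (M *ᵥ v') j ^ 2 = 0 :=
      le_antisymm (by simpa [hBv'] using hMB v') (by positivity)
    rw [← mulVec_mulVec, zero_mulVec]
    change M *ᵥ v' = 0
    funext j
    simpa using (Finset.sum_eq_zero_iff_of_nonneg fun j _ => sq_nonneg _).1 hMv' j
      (Finset.mem_univ j)
  rw [Matrix.mul_sub, Matrix.mul_one, sub_eq_zero] at hM
  simpa [transpose_mul, hGt, C, Matrix.mul_assoc] using congrArg transpose hM.symm

lemma glev_transpose_mulVec_le_of_dominated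
    (hMB : ∀ v, ∑ j, (M *ᵥ v) j ^ 2 ≤ c * ∑ j, (B *ᵥ v) j ^ 2) (x : Fin m → ℝ) :
    glev B (Mᵀ *ᵥ x) ≤ ENNReal.ofReal (c * ∑ j, x j ^ 2) := by
  obtain ⟨G, hGt, hG, -⟩ := (isHermitian_transpose_mul_self B).exists_pinv
  set z := G *ᵥ (Mᵀ *ᵥ x)
  have hCz : (Bᵀ * B) *ᵥ z = Mᵀ *ᵥ x := by
    rw [mulVec_mulVec, mulVec_mulVec, gram_mul_pinv_mul_transpose_of_dominated hMB hGt hG]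
  have ht : ∑ j, (B *ᵥ z) j ^ 2 = (M *ᵥ z) ⬝ᵥ x := by
    rw [sum_sq_mulVec_eq_dotProduct, hCz, dotProduct_transpose_mulVec, dotProduct_comm]
  set t := ∑ j, (B *ᵥ z) j ^ 2
  have hglev : glev B (Mᵀ *ᵥ x) ≤ ENNReal.ofReal t :=
    sInf_le ⟨B *ᵥ z, by rw [mulVec_mulVec, hCz], rfl⟩
  refine hglev.trans (ENNReal.ofReal_le_ofReal_iff'.2 ?_)
  rcases (show 0 ≤ t by positivity).eq_or_lt with ht0 | ht0
  · exact Or.inr ht0.ge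
  left
  have hCS : t ^ 2 ≤ c * t * ∑ j, x j ^ 2 := calc
    t ^ 2 ≤ (∑ j, (M *ᵥ z) j ^ 2) * ∑ j, x j ^ 2 := by
      rw [ht]; exact Finset.sum_mul_sq_le_sq_mul_sq _ _ _
    _ ≤ c * t * ∑ j, x j ^ 2 := by gcongr; exact hMB z
  nlinarith

lemma glev_row_le_mul_lev (hc : 0 ≤ c)
    (hMB : ∀ v, ∑ j, (M *ᵥ v) j ^ 2 ≤ c * ∑ j, (B *ᵥ v) j ^ 2) (i : Fin m) :
    glev B (M i) ≤ ENNReal.ofReal (c * lev M i) := by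
  have hmono : Monotone fun t : ℝ => ENNReal.ofReal (c * t) :=
    ENNReal.ofReal_mono.comp (monotone_id.const_mul hc)
  have hcont : Continuous fun t : ℝ => ENNReal.ofReal (c * t) :=
    ENNReal.continuous_ofReal.comp (continuous_const.mul continuous_id)
  have hne : {t : ℝ | ∃ x, Mᵀ *ᵥ x = M i ∧ t = ∑ j, x j ^ 2}.Nonempty :=
    ⟨_, Pi.single i 1, by rw [mulVec_single_one]; rfl, rfl⟩
  have hbdd : BddBelow {t : ℝ | ∃ x, Mᵀ *ᵥ x = M i ∧ t = ∑ j, x j ^ 2} :=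
    ⟨0, by rintro _ ⟨x, -, rfl⟩; positivity⟩
  rw [lev, hmono.map_csInf_of_continuousAt hcont.continuousAt hne hbdd]
  refine le_sInf ?_
  rintro _ ⟨_, ⟨x, hx, rfl⟩, rfl⟩
  exact hx ▸ glev_transpose_mulVec_le_of_dominated hMB x

end Domination

lemma lev_nonneg {n d : ℕ} (M : Matrix (Fin n) (Fin d) ℝ) (i : Fin n) : 0 ≤ lev M i :=
  Real.sInf_nonneg <| by rintro _ ⟨x, -, rfl⟩; positivity

lemma sum_lev_le {n d : ℕ} (M : Matrix (Fin n) (Fin d) ℝ) : ∑ i, lev M i ≤ d := by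
  obtain ⟨G, hGt, hG, htr⟩ := (isHermitian_transpose_mul_self M).exists_pinv
  have hfix : Mᵀ * (M * (G * Mᵀ)) = Mᵀ := by
    simpa [Matrix.mul_assoc] using
      gram_mul_pinv_mul_transpose_of_dominated (c := 1) (fun v => by simp) hGt hG
  set P := M * (G * Mᵀ)
  have hlev : ∀ i, lev M i ≤ ∑ j, P j i ^ 2 := fun i => by
    refine csInf_le ⟨0, by rintro _ ⟨x, -, rfl⟩; positivity⟩ ⟨P.col i, ?_, rfl⟩
    rw [← mulVec_single_one, mulVec_mulVec, hfix, mulVec_single_one]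
    rfl
  have hPP : Pᵀ * P = P := by
    simp only [P, transpose_mul, transpose_transpose, hGt, Matrix.mul_assoc, hfix]
  calc ∑ i, lev M i ≤ ∑ i, ∑ j, P j i ^ 2 := Finset.sum_le_sum fun i _ => hlev i
    _ = (Pᵀ * P).trace := by simp [trace, mul_apply, sq]
    _ = (Mᵀ * M * G).trace := by
      rw [hPP, trace_mul_comm, Matrix.mul_assoc, trace_mul_comm, Matrix.mul_assoc]
    _ ≤ d := by simpa using htr

lemma dotProduct_mulVec_transpose_mul_diagonal_mul {n d : ℕ} (A : Matrix (Fin n) (Fin d) ℝ)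
    (f : Fin n → ℝ) (v : Fin d → ℝ) :
    v ⬝ᵥ ((Aᵀ * diagonal f * A) *ᵥ v) = ∑ j, f j * (A *ᵥ v) j ^ 2 := by
  rw [← mulVec_mulVec, ← mulVec_mulVec, dotProduct_transpose_mulVec, dotProduct_comm]
  simp only [dotProduct, mulVec_diagonal]
  exact Finset.sum_congr rfl fun j _ => by ring

lemma sum_sq_diagonal_mul_mulVec {n d : ℕ} (A : Matrix (Fin n) (Fin d) ℝ) (f : Fin n → ℝ)
    (v : Fin d → ℝ) : ∑ j, ((diagonal f * A) *ᵥ v) j ^ 2 = ∑ j, f j ^ 2 * (A *ᵥ v) j ^ 2 := by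
  simp only [← mulVec_mulVec, mulVec_diagonal, mul_pow]

lemma sum_sq_reweighted_le {n d : ℕ} (A : Matrix (Fin n) (Fin d) ℝ) (s w : Fin n → ℝ) {α : ℝ}
    (hα : 0 < α) (hw : ∀ j, w j ^ 2 ≤ 1)
    (hv : (Aᵀ * diagonal (fun j => (w j * s j) ^ 2) * A -
        (α / 2) • (Aᵀ * diagonal (fun j => (w j) ^ 2) * A)).PosSemidef) (v : Fin d → ℝ) :
    ∑ j, ((diagonal w * A) *ᵥ v) j ^ 2 ≤ 2 / α * ∑ j, ((diagonal s * A) *ᵥ v) j ^ 2 := by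
  have hq := hv.dotProduct_mulVec_nonneg v
  simp only [star_trivial, sub_mulVec, smul_mulVec, dotProduct_sub, dotProduct_smul, smul_eq_mul,
    dotProduct_mulVec_transpose_mul_diagonal_mul, sub_nonneg] at hq
  have hws : ∑ j, (w j * s j) ^ 2 * (A *ᵥ v) j ^ 2 ≤ ∑ j, s j ^ 2 * (A *ᵥ v) j ^ 2 :=
    Finset.sum_le_sum fun j _ => by
      rw [mul_pow]
      gcongr
      exact mul_le_of_le_one_left (sq_nonneg _) (hw j)
  rw [sum_sq_diagonal_mul_mulVec, sum_sq_diagonal_mul_mulVec, div_mul_eq_mul_div,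
    le_div_iff₀ hα]
  linarith

theorem stmt15_general {n d : ℕ} (A : Matrix (Fin n) (Fin d) ℝ)
    (u : Fin n → ℝ) (hu : ∀ i, 0 ≤ u i) (α : ℝ) (hα0 : 0 < α)
    (s w : Fin n → ℝ)
    (hii : ∀ j, 0 ≤ w j ∧ w j ≤ 1)
    (hiv : (∑ i ∈ Finset.univ.filter (fun i => w i ≠ 1), u i) ≤ (d : ℝ) / α)
    (hv : (Aᵀ * Matrix.diagonal (fun j => (w j * s j) ^ 2) * A -
        (α / 2) • (Aᵀ * Matrix.diagonal (fun j => (w j) ^ 2) * A)).PosSemidef) :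
    ∑ i : Fin n, min (glev (Matrix.diagonal s * A) (A i)) (ENNReal.ofReal (u i)) ≤
      ENNReal.ofReal (3 * (d : ℝ) / α) := by
  have hdom := sum_sq_reweighted_le A s w hα0
    (fun j => pow_le_one₀ (hii j).1 (hii j).2) hv
  have hrow : ∀ i, min (glev (diagonal s * A) (A i)) (ENNReal.ofReal (u i)) ≤
      ENNReal.ofReal (2 / α * lev (diagonal w * A) i) +
        if w i ≠ 1 then ENNReal.ofReal (u i) else 0 := fun i => by
    by_cases hwi : w i = 1
    · have hrow_eq : (diagonal w * A) i = A i := by ext; simp [diagonal_mul, hwi]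
      simpa [hwi, hrow_eq] using
        (min_le_left _ _).trans (glev_row_le_mul_lev (by positivity) hdom i)
    · simp [hwi]
  calc _ ≤ ∑ i, (ENNReal.ofReal (2 / α * lev (diagonal w * A) i) +
        if w i ≠ 1 then ENNReal.ofReal (u i) else 0) := Finset.sum_le_sum fun i _ => hrow i
    _ = ENNReal.ofReal (2 / α * ∑ i, lev (diagonal w * A) i) +
        ENNReal.ofReal (∑ i ∈ Finset.univ.filter (fun i => w i ≠ 1), u i) := by
      rw [Finset.sum_add_distrib, ← Finset.sum_filter, Finset.mul_sum,
        ENNReal.ofReal_sum_of_nonneg fun i _ => mul_nonneg (by positivity) (lev_nonneg _ i),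
        ENNReal.ofReal_sum_of_nonneg fun i _ => hu i]
    _ ≤ ENNReal.ofReal (2 / α * d) + ENNReal.ofReal (d / α) := by
      gcongr
      exact sum_lev_le _
    _ = ENNReal.ofReal (3 * d / α) := by
      rw [← ENNReal.ofReal_add (by positivity) (by positivity)]
      ring_nf

/-- deterministic core of leverage score approximation via undersampling:
if (i) `AᵀS²A ⪯ AᵀA`, (ii) `0 ≤ Wⱼⱼ ≤ 1`, (iii) `τᵢ(WA) ≤ α·uᵢ`,
(iv) `∑_{i : Wᵢᵢ ≠ 1} uᵢ ≤ d/α`, and (v) `(α/2)·AᵀW²A ⪯ AᵀWS²WA`, then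
`∑ᵢ min{τᵢ^{SA}(A), uᵢ} ≤ 3d/α` (mins taken in `[0,∞]`). -/
theorem stmt15 {n d : ℕ} (A : Matrix (Fin n) (Fin d) ℝ)
    (u : Fin n → ℝ) (hu : ∀ i, 0 ≤ u i) (α : ℝ) (hα0 : 0 < α) (hα1 : α ≤ 1)
    (s w : Fin n → ℝ) (hs : ∀ j, 0 ≤ s j)
    (hi : (Aᵀ * A - Aᵀ * Matrix.diagonal (fun j => (s j) ^ 2) * A).PosSemidef)
    (hii : ∀ j, 0 ≤ w j ∧ w j ≤ 1)
    (hiii : ∀ i, lev (Matrix.diagonal w * A) i ≤ α * u i)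
    (hiv : (∑ i ∈ Finset.univ.filter (fun i => w i ≠ 1), u i) ≤ (d : ℝ) / α)
    (hv : (Aᵀ * Matrix.diagonal (fun j => (w j * s j) ^ 2) * A -
        (α / 2) • (Aᵀ * Matrix.diagonal (fun j => (w j) ^ 2) * A)).PosSemidef) :
    ∑ i : Fin n, min (glev (Matrix.diagonal s * A) (A i)) (ENNReal.ofReal (u i)) ≤
      ENNReal.ofReal (3 * (d : ℝ) / α) :=
  stmt15_general A u hu α hα0 s w hii hiv hv
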